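/- arXiv:1510.04476 — 5 statements merged into one kernel-verified Lean document; each statement's English description precedes it below -/
import Mathlib

section
/- Let X be a uniquely geodesic Busemann nonpositively curved space and p ∈ X. The angle function ∠_p defined by ∠_p(c₁, c₂) = lim_{t→0⁺} d(c₁(t), c₂(t))/t on unit-speed geodesics emanating from p satisfies the triangle inequality: ∠_p(c₁, c₃) ≤ ∠_p(c₁, c₂) + ∠_p(c₂, c₃). -/
/-- A constant-speed globally minimizing geodesic line. -/
def IsGeodesicLine {X : Type*} [MetricSpace X] (speed : ℝ) (γ : ℝ → X) : Prop :=
  ∀ s t : ℝ, dist (γ s) (γ t) = speed * |s - t|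

/-- Busemann nonpositive curvature: distance between geodesics is convex. -/
def BusemannConvex (X : Type*) [MetricSpace X] : Prop :=
  ∀ (α β : ℝ → X) (a b : ℝ), IsGeodesicLine a α → IsGeodesicLine b β →
    ConvexOn ℝ Set.univ (fun t => dist (α t) (β t))

/-- Uniquely geodesic metric space. -/
def UniquelyGeodesic (X : Type*) [MetricSpace X] : Prop :=
  ∀ x y : X, ∃! γ : ℝ → X, γ 0 = x ∧ γ 1 = y ∧ IsGeodesicLine (dist x y) γ

theorem angle_triangle_inequality_general
    {X : Type*} [MetricSpace X]
    (c₁ c₂ c₃ : ℝ → X)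
    (A₁₂ A₂₃ A₁₃ : ℝ)
    (hA₁₂ : Filter.Tendsto (fun t => dist (c₁ t) (c₂ t) / t)
        (nhdsWithin 0 (Set.Ioi 0)) (nhds A₁₂))
    (hA₂₃ : Filter.Tendsto (fun t => dist (c₂ t) (c₃ t) / t)
        (nhdsWithin 0 (Set.Ioi 0)) (nhds A₂₃))
    (hA₁₃ : Filter.Tendsto (fun t => dist (c₁ t) (c₃ t) / t)
        (nhdsWithin 0 (Set.Ioi 0)) (nhds A₁₃)) :
    A₁₃ ≤ A₁₂ + A₂₃ := by
  refine le_of_tendsto_of_tendsto hA₁₃ (hA₁₂.add hA₂₃) ?_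
  filter_upwards [self_mem_nhdsWithin] with t (ht : 0 < t)
  rw [← add_div]
  exact div_le_div_of_nonneg_right (dist_triangle _ _ _) ht.le

/-- The angle ∠_p, defined as lim_{t→0⁺} d(c₁(t),c₂(t))/t on
unit-speed geodesics emanating from p, satisfies the triangle inequality. -/
theorem angle_triangle_inequality
    {X : Type*} [MetricSpace X]
    (huniq : UniquelyGeodesic X) (hconv : BusemannConvex X)
    (c₁ c₂ c₃ : ℝ → X) (p : X)
    (h₁ : IsGeodesicLine 1 c₁) (h₂ : IsGeodesicLine 1 c₂) (h₃ : IsGeodesicLine 1 c₃)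
    (hp₁ : c₁ 0 = p) (hp₂ : c₂ 0 = p) (hp₃ : c₃ 0 = p)
    (A₁₂ A₂₃ A₁₃ : ℝ)
    (hA₁₂ : Filter.Tendsto (fun t => dist (c₁ t) (c₂ t) / t)
        (nhdsWithin 0 (Set.Ioi 0)) (nhds A₁₂))
    (hA₂₃ : Filter.Tendsto (fun t => dist (c₂ t) (c₃ t) / t)
        (nhdsWithin 0 (Set.Ioi 0)) (nhds A₂₃))
    (hA₁₃ : Filter.Tendsto (fun t => dist (c₁ t) (c₃ t) / t)
        (nhdsWithin 0 (Set.Ioi 0)) (nhds A₁₃)) :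
    A₁₃ ≤ A₁₂ + A₂₃ :=
  angle_triangle_inequality_general c₁ c₂ c₃ A₁₂ A₂₃ A₁₃ hA₁₂ hA₂₃ hA₁₃
end

section
/- Let X be a Busemann nonpositively curved space, α, β : ℝ → X two parallel unit-speed geodesic lines with β(0) the foot point of α(0) on β (i.e., d(α(0), β(0)) = inf_t d(α(0), β(t))). Then for every t ∈ ℝ, β(t) is the foot point of α(t) on β: d(α(t), β(t)) = inf_s d(α(t), β(s)). -/
/-- A convex function on ℝ that is bounded above is constant. -/
lemma convexOn_bounded_le {f : ℝ → ℝ} (hf : ConvexOn ℝ Set.univ f) {M : ℝ}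
    (hM : ∀ x, f x ≤ M) (x y : ℝ) : f y ≤ f x := by
  by_contra h
  push_neg at h
  have hd : 0 < f y - f x := by linarith
  obtain ⟨T, hT⟩ : ∃ T : ℝ, T = (M - f x) / (f y - f x) + 1 := ⟨_, rfl⟩
  have hT1 : 1 ≤ T := by
    have h0 : 0 ≤ (M - f x) / (f y - f x) := div_nonneg (by linarith [hM x]) hd.le
    linarith
  have hT0 : 0 < T := by linarith
  have hTD : T * (f y - f x) = (M - f x) + (f y - f x) := by
    rw [hT, add_mul, div_mul_cancel₀ _ hd.ne', one_mul]
  have ha : (0:ℝ) ≤ 1 - 1/T := by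
    have : 1/T ≤ 1 := by rw [div_le_one hT0]; exact hT1
    linarith
  have hb : (0:ℝ) < 1/T := by positivity
  have hab : (1 - 1/T) + 1/T = 1 := by ring
  have hinv : T * (1/T) = 1 := mul_one_div_cancel hT0.ne'
  have hxy : (1 - 1/T) • x + (1/T) • (x + T * (y - x)) = y := by
    simp only [smul_eq_mul]
    field_simp
    ring
  have hkey := hf.2 (Set.mem_univ x) (Set.mem_univ (x + T * (y - x))) ha hb.le hab
  rw [hxy] at hkey
  simp only [smul_eq_mul] at hkey
  have hz : f (x + T * (y - x)) ≤ M := hM _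
  nlinarith [mul_le_mul_of_nonneg_left hkey hT0.le]

/-- If α, β are parallel unit-speed geodesic lines and β(0) is the
foot point of α(0) on β, then β(t) is the foot point of α(t) on β for all t. -/
theorem foot_point_travels_with_parameter
    {X : Type*} [MetricSpace X]
    (huniq : UniquelyGeodesic X) (hconv : BusemannConvex X)
    (α β : ℝ → X)
    (hα : IsGeodesicLine 1 α) (hβ : IsGeodesicLine 1 β)
    (c : ℝ) (hpar : ∀ t : ℝ, dist (α t) (β t) ≤ c)
    (hfoot : dist (α 0) (β 0) = ⨅ s : ℝ, dist (α 0) (β s)) :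
    ∀ t : ℝ, dist (α t) (β t) = ⨅ s : ℝ, dist (α t) (β s) := by
  -- For each r, t ↦ dist (α t) (β (t + r)) is convex and bounded, hence constant.
  have hconst : ∀ r t : ℝ, dist (α t) (β (t + r)) = dist (α 0) (β r) := by
    intro r t
    have hβr : IsGeodesicLine 1 (fun u => β (u + r)) := by
      intro s t
      have := hβ (s + r) (t + r)
      simpa using this
    have hcv : ConvexOn ℝ Set.univ (fun t => dist (α t) (β (t + r))) :=
      hconv α (fun u => β (u + r)) 1 1 hα hβr
    have hbd : ∀ t : ℝ, dist (α t) (β (t + r)) ≤ c + |r| := by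
      intro t
      have h1 : dist (α t) (β (t + r)) ≤ dist (α t) (β t) + dist (β t) (β (t + r)) :=
        dist_triangle _ _ _
      have h2 : dist (β t) (β (t + r)) = |r| := by
        have := hβ t (t + r)
        simpa [abs_sub_comm] using this
      have := hpar t
      linarith
    have h1 := convexOn_bounded_le hcv hbd t 0
    have h2 := convexOn_bounded_le hcv hbd 0 t
    simpa using le_antisymm h2 h1
  intro t
  have hre : ∀ s : ℝ, dist (α t) (β s) = dist (α 0) (β (s - t)) := by
    intro s
    have h := hconst (s - t) t
    rwa [show t + (s - t) = s by ring] at h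
  have hrange : Set.range (fun s : ℝ => dist (α 0) (β (s - t)))
      = Set.range (fun u : ℝ => dist (α 0) (β u)) := by
    ext d
    simp only [Set.mem_range]
    constructor
    · rintro ⟨s, rfl⟩; exact ⟨s - t, rfl⟩
    · rintro ⟨u, rfl⟩; exact ⟨u + t, by rw [add_sub_cancel_right]⟩
  have hinf : (⨅ s : ℝ, dist (α t) (β s)) = ⨅ u : ℝ, dist (α 0) (β u) := by
    rw [show (fun s : ℝ => dist (α t) (β s)) = fun s : ℝ => dist (α 0) (β (s - t)) from
      funext hre, ← sInf_range, ← sInf_range, hrange]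
  have h0 : dist (α t) (β t) = dist (α 0) (β 0) := by
    have h := hconst 0 t
    simpa using h
  rw [hinf, h0, hfoot]
end

section
/- Let X be a Busemann nonpositively curved uniquely geodesic space, γ a unit-speed geodesic, and x a boundary point at infinity with the property that from every point there is a unique geodesic ray asymptotic to the class of x. For t ≥ 0 let w(t) denote the initial direction at γ(t) of the ray from γ(t) to x. Then the angle ∠_{γ(0)}(γ'(0), w(0)) ≤ ∠_{γ(t)}(γ'(t), w(t)) for every t > 0 (monotonicity of the angle to a point at infinity along a geodesic). -/
/-- A unit-speed geodesic ray, parameterized on [0,∞). -/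
def IsGeodesicRay {X : Type*} [MetricSpace X] (γ : ℝ → X) : Prop :=
  ∀ s t : ℝ, 0 ≤ s → 0 ≤ t → dist (γ s) (γ t) = |s - t|

/-- Two rays are asymptotic if they stay at bounded distance for t ≥ 0. -/
def AsymptoticRays {X : Type*} [MetricSpace X] (γ δ : ℝ → X) : Prop :=
  ∃ c : ℝ, ∀ t : ℝ, 0 ≤ t → dist (γ t) (δ t) ≤ c

open Set Filter Topology

section Geodesics

variable {X : Type*} [MetricSpace X]

lemma IsGeodesicLine.isGeodesicRay {γ : ℝ → X} (hγ : IsGeodesicLine 1 γ) : IsGeodesicRay γ :=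
  fun s t _ _ => by rw [hγ, one_mul]

lemma IsGeodesicLine.comp_mul {k a : ℝ} {σ : ℝ → X} (hσ : IsGeodesicLine k σ) (ha : 0 ≤ a) :
    IsGeodesicLine (k * a) (fun u => σ (a * u)) := fun s t => by
  rw [hσ, ← mul_sub, abs_mul, abs_of_nonneg ha, mul_assoc]

lemma IsGeodesicRay.comp_add {w : ℝ → X} (hw : IsGeodesicRay w) {t : ℝ} (ht : 0 ≤ t) :
    IsGeodesicRay (fun u => w (t + u)) := fun s u hs hu => by
  rw [hw _ _ (by linarith) (by linarith), add_sub_add_left_eq_sub]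

lemma IsGeodesicLine.dist_eq_of_mem_Icc_of_notMem {k : ℝ} {σ c : ℝ → X}
    (hσ : IsGeodesicLine k σ)
    (hc : ∀ u ∈ Icc (0 : ℝ) 1, ∀ v ∈ Icc (0 : ℝ) 1, dist (c u) (c v) = k * |u - v|)
    (h0 : c 0 = σ 0) (h1 : c 1 = σ 1) {u v : ℝ} (hu : u ∈ Icc (0 : ℝ) 1)
    (hv : v ∉ Icc (0 : ℝ) 1) : dist (c u) (σ v) = k * |u - v| := by
  have mem0 : (0 : ℝ) ∈ Icc (0 : ℝ) 1 := left_mem_Icc.2 zero_le_one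
  have mem1 : (1 : ℝ) ∈ Icc (0 : ℝ) 1 := right_mem_Icc.2 zero_le_one
  have upper : ∀ e ∈ Icc (0 : ℝ) 1, c e = σ e → dist (c u) (σ v) ≤ k * |u - e| + k * |e - v| :=
    fun e he hce => by
      rw [← hc u hu e he, ← hσ, ← hce]; exact dist_triangle _ _ _
  have lower : ∀ e ∈ Icc (0 : ℝ) 1, c e = σ e → k * |e - v| ≤ k * |e - u| + dist (c u) (σ v) :=
    fun e he hce => by
      rw [← hc e he u hu, ← hσ, ← hce]; exact dist_triangle _ _ _
  have up0 := upper 0 mem0 h0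
  have up1 := upper 1 mem1 h1
  have lo0 := lower 0 mem0 h0
  have lo1 := lower 1 mem1 h1
  obtain ⟨hu0, hu1⟩ := hu
  simp only [mem_Icc, not_and_or, not_le] at hv
  rcases hv with hv | hv
  · rw [abs_of_nonneg (by linarith : 0 ≤ u - 0), abs_of_nonneg (by linarith : 0 ≤ 0 - v),
      abs_of_nonneg (by linarith : 0 ≤ u - v)] at *
    rw [abs_of_nonneg (by linarith : 0 ≤ 1 - v), abs_of_nonneg (by linarith : 0 ≤ 1 - u)] at lo1
    linarith
  · rw [abs_of_nonpos (by linarith : u - 1 ≤ 0), abs_of_nonpos (by linarith : 1 - v ≤ 0),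
      abs_of_nonpos (by linarith : u - v ≤ 0)] at *
    rw [abs_of_nonpos (by linarith : 0 - v ≤ 0), abs_of_nonpos (by linarith : 0 - u ≤ 0)] at lo0
    linarith

lemma IsGeodesicLine.piecewise_Icc {k : ℝ} {σ c : ℝ → X} (hσ : IsGeodesicLine k σ)
    (hc : ∀ u ∈ Icc (0 : ℝ) 1, ∀ v ∈ Icc (0 : ℝ) 1, dist (c u) (c v) = k * |u - v|)
    (h0 : c 0 = σ 0) (h1 : c 1 = σ 1) :
    IsGeodesicLine k ((Icc 0 1).piecewise c σ) := by
  intro u v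
  by_cases hu : u ∈ Icc (0 : ℝ) 1 <;> by_cases hv : v ∈ Icc (0 : ℝ) 1 <;>
    simp only [piecewise_eq_of_mem, piecewise_eq_of_notMem, hu, hv, not_false_eq_true]
  · exact hc u hu v hv
  · exact hσ.dist_eq_of_mem_Icc_of_notMem hc h0 h1 hu hv
  · rw [dist_comm, abs_sub_comm]
    exact hσ.dist_eq_of_mem_Icc_of_notMem hc h0 h1 hv hu
  · exact hσ u v

/-- Glued to the line through its endpoints, the segment is again a geodesic line, so uniqueness
identifies the two. -/
lemma UniquelyGeodesic.exists_geodesicLine_eqOn_Icc (huniq : UniquelyGeodesic X) {c : ℝ → X}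
    (hc : ∀ u ∈ Icc (0 : ℝ) 1, ∀ v ∈ Icc (0 : ℝ) 1, dist (c u) (c v) = dist (c 0) (c 1) * |u - v|) :
    ∃ σ, IsGeodesicLine (dist (c 0) (c 1)) σ ∧ EqOn σ c (Icc 0 1) := by
  obtain ⟨σ, ⟨hσ0, hσ1, hσ⟩, hσ_unique⟩ := huniq (c 0) (c 1)
  have hglue := hσ.piecewise_Icc hc hσ0.symm hσ1.symm
  have hσ_eq : (Icc 0 1).piecewise c σ = σ :=
    hσ_unique _ ⟨by simp, by simp, hglue⟩
  refine ⟨σ, hσ, fun u hu => ?_⟩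
  rw [← hσ_eq, piecewise_eq_of_mem _ _ _ hu]

lemma IsGeodesicRay.exists_geodesicLine_eqOn (huniq : UniquelyGeodesic X) {w : ℝ → X}
    (hw : IsGeodesicRay w) {s : ℝ} (hs : 0 < s) :
    ∃ L, IsGeodesicLine 1 L ∧ EqOn L w (Icc 0 s) := by
  have hc : ∀ u ∈ Icc (0 : ℝ) 1, ∀ v ∈ Icc (0 : ℝ) 1,
      dist (w (s * u)) (w (s * v)) = dist (w (s * 0)) (w (s * 1)) * |u - v| := by
    intro u hu v hv
    rw [hw _ _ (by nlinarith [hu.1]) (by nlinarith [hv.1]), hw _ _ (by simp) (by simp [hs.le]),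
      ← mul_sub, ← mul_sub, abs_mul, abs_mul, abs_of_pos hs]
    simp
  obtain ⟨σ, hσ, hσw⟩ := huniq.exists_geodesicLine_eqOn_Icc hc
  refine ⟨fun u => σ (s⁻¹ * u), ?_, fun u hu => ?_⟩
  · have hσs := hσ.comp_mul (inv_nonneg.2 hs.le)
    rwa [mul_zero, mul_one, hw 0 s le_rfl hs.le, zero_sub, abs_neg, abs_of_pos hs,
      mul_inv_cancel₀ hs.ne'] at hσs
  · have hmem : s⁻¹ * u ∈ Icc (0 : ℝ) 1 :=
      ⟨by have := hu.1; positivity, by rw [inv_mul_le_one₀ hs]; exact hu.2⟩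
    simp only [hσw hmem, mul_inv_cancel_left₀ hs.ne']

lemma convexOn_dist_of_isGeodesicRay (huniq : UniquelyGeodesic X) (hconv : BusemannConvex X)
    {α β : ℝ → X} (hα : IsGeodesicRay α) (hβ : IsGeodesicRay β) :
    ConvexOn ℝ (Ici 0) (fun u => dist (α u) (β u)) := by
  refine ⟨convex_Ici 0, fun x hx y hy a b ha hb hab => ?_⟩
  have hs : 0 < max x y + 1 := by linarith [le_max_left x y, mem_Ici.1 hx]
  obtain ⟨Lα, hLα, hLαeq⟩ := hα.exists_geodesicLine_eqOn huniq hs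
  obtain ⟨Lβ, hLβ, hLβeq⟩ := hβ.exists_geodesicLine_eqOn huniq hs
  have hconvIcc : ConvexOn ℝ (Icc 0 (max x y + 1)) (fun u => dist (α u) (β u)) :=
    ((hconv Lα Lβ 1 1 hLα hLβ).subset (subset_univ _) (convex_Icc _ _)).congr
      fun u hu => by simp only [hLαeq hu, hLβeq hu]
  exact hconvIcc.2 ⟨hx, by linarith [le_max_left x y]⟩ ⟨hy, by linarith [le_max_right x y]⟩
    ha hb hab

end Geodesics

lemma ConvexOn.antitoneOn_of_bddAbove {f : ℝ → ℝ} {a : ℝ} (hf : ConvexOn ℝ (Ici a) f)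
    (hbdd : BddAbove (f '' Ici a)) : AntitoneOn f (Ici a) := by
  intro x hx y hy hxy
  by_contra! hlt
  obtain ⟨M, hM⟩ := hbdd
  have hxy' : x < y := lt_of_le_of_ne hxy (by rintro rfl; exact hlt.false)
  set m := (f y - f x) / (y - x) with hm
  have hm_pos : 0 < m := div_pos (by linarith) (by linarith)
  have hfyM : f y ≤ M := hM (mem_image_of_mem f hy)
  -- a positive secant slope persists to the right, so `f` would exceed `M` at `z`
  set z := y + (M - f y) / m + 1 with hz
  have hyz : y < z := by linarith [div_nonneg (sub_nonneg.2 hfyM) hm_pos.le]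
  have hslope := hf.slope_mono_adjacent hx (mem_Ici.2 (by linarith [mem_Ici.1 hy])) hxy' hyz
  rw [← hm, le_div_iff₀ (by linarith)] at hslope
  have hfzM : f z ≤ M := hM (mem_image_of_mem f (mem_Ici.2 (by linarith [mem_Ici.1 hy])))
  have : m * (z - y) = M - f y + m := by rw [hz]; field_simp; ring
  linarith

lemma ConvexOn.le_div_of_tendsto_nhdsGT {f : ℝ → ℝ} {A t : ℝ} (hf : ConvexOn ℝ (Ici 0) f)
    (hf0 : f 0 = 0) (hA : Tendsto (fun r => f r / r) (𝓝[>] 0) (𝓝 A)) (ht : 0 < t) :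
    A ≤ f t / t := by
  refine le_of_tendsto hA ?_
  filter_upwards [Ioo_mem_nhdsGT ht] with r hr
  simpa [hf0] using hf.secant_mono (a := 0) self_mem_Ici (mem_Ici.2 hr.1.le) (mem_Ici.2 ht.le)
    hr.1.ne' ht.ne' hr.2.le

/-- Monotonicity of the angle to a point at infinity along a
geodesic: if `w t` is the unique unit-speed ray from γ(t) asymptotic to a fixed
ideal point (represented by the mutually asymptotic family `w`), then the angle
at γ(0) between γ and w 0 is at most the angle at γ(t) between γ and w t. -/
theorem angle_to_infinity_monotone
    {X : Type*} [MetricSpace X]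
    (huniq : UniquelyGeodesic X) (hconv : BusemannConvex X)
    (γ : ℝ → X) (hγ : IsGeodesicLine 1 γ)
    (w : ℝ → ℝ → X)
    (hw_ray : ∀ t : ℝ, 0 ≤ t → IsGeodesicRay (w t))
    (hw_foot : ∀ t : ℝ, 0 ≤ t → w t 0 = γ t)
    (hw_asymp : ∀ s t : ℝ, 0 ≤ s → 0 ≤ t → AsymptoticRays (w s) (w t))
    (t : ℝ) (ht : 0 < t)
    (A₀ Aₜ : ℝ)
    (hA₀ : Filter.Tendsto (fun r => dist (γ r) (w 0 r) / r)
        (nhdsWithin 0 (Set.Ioi 0)) (nhds A₀))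
    (hAₜ : Filter.Tendsto (fun r => dist (γ (t + r)) (w t r) / r)
        (nhdsWithin 0 (Set.Ioi 0)) (nhds Aₜ)) :
    A₀ ≤ Aₜ := by
  set d : ℝ → ℝ := fun u => dist (γ u) (w 0 u)
  set c : ℝ → ℝ := fun u => dist (w t u) (w 0 (t + u))
  have hw₀ := hw_ray 0 le_rfl
  have hd_convex : ConvexOn ℝ (Ici 0) d :=
    convexOn_dist_of_isGeodesicRay huniq hconv hγ.isGeodesicRay hw₀
  have hd0 : d 0 = 0 := by simp [d, hw_foot 0 le_rfl]
  have hc_antitone : AntitoneOn c (Ici 0) := by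
    refine (convexOn_dist_of_isGeodesicRay huniq hconv (hw_ray t ht.le)
      (hw₀.comp_add ht.le)).antitoneOn_of_bddAbove ?_
    obtain ⟨C, hC⟩ := hw_asymp t 0 ht.le le_rfl
    refine ⟨C + t, forall_mem_image.2 fun u hu => ?_⟩
    calc c u ≤ dist (w t u) (w 0 u) + dist (w 0 u) (w 0 (t + u)) := dist_triangle _ _ _
      _ ≤ C + t := by
        rw [hw₀ _ _ hu (by linarith [mem_Ici.1 hu]), abs_sub_comm, add_sub_cancel_right,
          abs_of_pos ht]
        linarith [hC u hu]
  refine ge_of_tendsto hAₜ ?_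
  filter_upwards [self_mem_nhdsWithin] with r (hr : 0 < r)
  have hc_le : c r ≤ c 0 := hc_antitone self_mem_Ici (mem_Ici.2 hr.le) hr.le
  have hd_step : d (t + r) ≤ dist (γ (t + r)) (w t r) + d t := by
    calc d (t + r) ≤ dist (γ (t + r)) (w t r) + c r := dist_triangle _ _ _
      _ ≤ dist (γ (t + r)) (w t r) + d t := by
        simpa [c, d, hw_foot t ht.le] using hc_le
  have hslope := hd_convex.slope_mono_adjacent self_mem_Ici (mem_Ici.2 (by linarith))
    ht (lt_add_of_pos_right t hr)
  rw [sub_zero, hd0, sub_zero, add_sub_cancel_left] at hslope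
  calc A₀ ≤ d t / t := hd_convex.le_div_of_tendsto_nhdsGT hd0 hA₀ ht
    _ ≤ (d (t + r) - d t) / r := hslope
    _ ≤ dist (γ (t + r)) (w t r) / r := by gcongr; linarith
end

section
/- With the setup of the previous statement, the function Td(x,y) = lim_{t→∞} d(α(t), β(t))/t on X(∞) × X(∞) is a metric: it is nonnegative, symmetric, vanishes exactly when x = y, and satisfies the triangle inequality. -/
/-! Nonnegativity, symmetry and the triangle inequality pass to the limit from those of `d`.
For definiteness, Busemann convexity along the lines containing `α|[0, S]` and `β|[0, S]`
gives `d(α t, β t) ≤ (t / S) d(α S, β S)` for `t ≤ S`; letting `S → ∞` yields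
`d(α t, β t) ≤ t · Td(x, y)`, so `Td(x, y) = 0` forces `α = β`. -/

open Set Filter Topology

section

variable {X : Type*} [MetricSpace X]

lemma IsGeodesicLine.comp_mul_right {c : ℝ} {γ : ℝ → X} (hγ : IsGeodesicLine c γ) {k : ℝ}
    (hk : 0 ≤ k) : IsGeodesicLine (c * k) (fun s => γ (s * k)) := by
  intro s t
  rw [hγ, ← sub_mul, abs_mul, abs_of_nonneg hk]
  ring

lemma IsGeodesicRay.dist_zero {γ : ℝ → X} (hγ : IsGeodesicRay γ) {t : ℝ} (ht : 0 ≤ t) :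
    dist (γ 0) (γ t) = t := by
  rw [hγ 0 t le_rfl ht, zero_sub, abs_neg, abs_of_nonneg ht]

lemma IsGeodesicLine.piecewise_Icc_s12 {f g : ℝ → X} (hg : IsGeodesicLine 1 g) {a b : ℝ}
    (hab : a ≤ b) (hf : ∀ s ∈ Icc a b, ∀ t ∈ Icc a b, dist (f s) (f t) = |s - t|)
    (ha : f a = g a) (hb : f b = g b) :
    IsGeodesicLine 1 ((Icc a b).piecewise f g) := by
  have hg' : ∀ s t, dist (g s) (g t) = |s - t| := fun s t => by rw [hg, one_mul]
  have mixed : ∀ s ∈ Icc a b, ∀ t ∉ Icc a b, dist (f s) (g t) = |s - t| := by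
    intro s hs t ht
    have hfa : dist (f s) (g a) = s - a := by
      rw [← ha, hf s hs a ⟨le_rfl, hab⟩, abs_of_nonneg (by linarith [hs.1])]
    have hfb : dist (g b) (f s) = b - s := by
      rw [← hb, hf b ⟨hab, le_rfl⟩ s hs, abs_of_nonneg (by linarith [hs.2])]
    rcases not_and_or.mp ht with hta | htb
    · rw [not_le] at hta
      rw [abs_of_nonneg (by linarith [hs.1])]
      have hat : dist (g a) (g t) = a - t := by rw [hg', abs_of_nonneg (by linarith)]
      have hbt : dist (g b) (g t) = b - t := by rw [hg', abs_of_nonneg (by linarith)]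
      linarith [dist_triangle (f s) (g a) (g t), dist_triangle (g b) (f s) (g t)]
    · rw [not_le] at htb
      rw [abs_of_nonpos (by linarith [hs.2])]
      have hbt : dist (g b) (g t) = t - b := by rw [hg', abs_of_nonpos (by linarith)]; ring
      have hat : dist (g a) (g t) = t - a := by rw [hg', abs_of_nonpos (by linarith)]; ring
      linarith [dist_triangle (f s) (g b) (g t), dist_triangle (g a) (f s) (g t),
        dist_comm (g b) (f s), dist_comm (f s) (g a)]
  intro s t
  rw [one_mul]
  by_cases hs : s ∈ Icc a b <;> by_cases ht : t ∈ Icc a b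
  · simp only [piecewise_eq_of_mem _ _ _ hs, piecewise_eq_of_mem _ _ _ ht, hf s hs t ht]
  · simp only [piecewise_eq_of_mem _ _ _ hs, piecewise_eq_of_notMem _ _ _ ht, mixed s hs t ht]
  · simp only [piecewise_eq_of_notMem _ _ _ hs, piecewise_eq_of_mem _ _ _ ht, dist_comm (g s),
      mixed t ht s hs, abs_sub_comm]
  · simp only [piecewise_eq_of_notMem _ _ _ hs, piecewise_eq_of_notMem _ _ _ ht, hg']

/-- Splicing `α|[0, S]` into the line `g` through `α 0` and `α S` gives another such line,
so by uniqueness the segment lies on `g`. -/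
lemma IsGeodesicRay.eq_of_uniquelyGeodesic (huniq : UniquelyGeodesic X) {α : ℝ → X}
    (hα : IsGeodesicRay α) {S T : ℝ} (hS : 0 < S) (hT : 0 ≤ T) (hTS : T ≤ S) {g : ℝ → X}
    (hg0 : g 0 = α 0) (hg1 : g 1 = α S) (hg : IsGeodesicLine S g) :
    α T = g (T / S) := by
  set σ := (Icc 0 S).piecewise α (fun u => g (u * S⁻¹))
  have hσ : IsGeodesicLine 1 σ := by
    have hunit := hg.comp_mul_right (inv_nonneg.2 hS.le)
    rw [mul_inv_cancel₀ hS.ne'] at hunit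
    refine hunit.piecewise_Icc_s12 hS.le (fun s hs t ht => hα s t hs.1 ht.1) ?_ ?_
    · simp [hg0]
    · simp [mul_inv_cancel₀ hS.ne', hg1]
  have hσ0 : σ 0 = α 0 := piecewise_eq_of_mem _ _ _ ⟨le_rfl, hS.le⟩
  have hσS : σ S = α S := piecewise_eq_of_mem _ _ _ ⟨hS.le, le_rfl⟩
  have hline : (fun s => σ (s * S)) = g := by
    refine (huniq (α 0) (α S)).unique ⟨?_, ?_, ?_⟩ ⟨hg0, hg1, ?_⟩
    · simpa using hσ0
    · simpa using hσS
    · simpa [hα.dist_zero hS.le] using hσ.comp_mul_right hS.le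
    · rwa [hα.dist_zero hS.le]
  calc α T = σ (T / S * S) := by
        rw [div_mul_cancel₀ _ hS.ne']
        exact (piecewise_eq_of_mem (Icc 0 S) _ _ ⟨hT, hTS⟩).symm
    _ = g (T / S) := congrFun hline _

/-- Busemann convexity only speaks about lines, so it is applied to the lines through the
common origin and `α S`, `β S`, which contain the initial segments of the rays. -/
lemma IsGeodesicRay.dist_le_div_mul (huniq : UniquelyGeodesic X) (hconv : BusemannConvex X)
    {α β : ℝ → X} (hα : IsGeodesicRay α) (hβ : IsGeodesicRay β) (h0 : α 0 = β 0)
    {S T : ℝ} (hS : 0 < S) (hT : 0 ≤ T) (hTS : T ≤ S) :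
    dist (α T) (β T) ≤ T / S * dist (α S) (β S) := by
  obtain ⟨gα, ⟨hgα0, hgα1, hgα⟩, -⟩ := huniq (α 0) (α S)
  obtain ⟨gβ, ⟨hgβ0, hgβ1, hgβ⟩, -⟩ := huniq (β 0) (β S)
  rw [hα.dist_zero hS.le] at hgα
  rw [hβ.dist_zero hS.le] at hgβ
  have hratio : T / S ∈ Icc (0 : ℝ) 1 := ⟨div_nonneg hT hS.le, (div_le_one hS).2 hTS⟩
  have hcv := (hconv gα gβ S S hgα hgβ).2 (mem_univ 0) (mem_univ 1)
    (sub_nonneg.2 hratio.2) hratio.1 (sub_add_cancel 1 (T / S))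
  simp only [smul_eq_mul, mul_zero, mul_one, zero_add, hgα0, hgβ0, h0, dist_self] at hcv
  rwa [hα.eq_of_uniquelyGeodesic huniq hS hT hTS hgα0 hgα1 hgα,
    hβ.eq_of_uniquelyGeodesic huniq hS hT hTS hgβ0 hgβ1 hgβ, ← hgα1, ← hgβ1]

lemma IsGeodesicRay.dist_le_mul_of_tendsto (huniq : UniquelyGeodesic X)
    (hconv : BusemannConvex X) {α β : ℝ → X} (hα : IsGeodesicRay α) (hβ : IsGeodesicRay β)
    (h0 : α 0 = β 0) {L : ℝ} (hL : Tendsto (fun t => dist (α t) (β t) / t) atTop (𝓝 L))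
    {t : ℝ} (ht : 0 ≤ t) :
    dist (α t) (β t) ≤ t * L := by
  refine ge_of_tendsto (hL.const_mul t) ?_
  filter_upwards [eventually_gt_atTop t] with S hS
  calc dist (α t) (β t) ≤ t / S * dist (α S) (β S) :=
        hα.dist_le_div_mul huniq hconv hβ h0 (ht.trans_lt hS) ht hS.le
    _ = t * (dist (α S) (β S) / S) := by ring

end

theorem tits_distance_is_metric_general
    {X : Type*} [MetricSpace X]
    (huniq : UniquelyGeodesic X) (hconv : BusemannConvex X)
    (p : X) (α β δ : ℝ → X)
    (hα : IsGeodesicRay α) (hβ : IsGeodesicRay β)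
    (hpα : α 0 = p) (hpβ : β 0 = p)
    (Lαβ Lβα Lαδ Lβδ : ℝ)
    (hαβ : Filter.Tendsto (fun t => dist (α t) (β t) / t) Filter.atTop (nhds Lαβ))
    (hβα : Filter.Tendsto (fun t => dist (β t) (α t) / t) Filter.atTop (nhds Lβα))
    (hαδ : Filter.Tendsto (fun t => dist (α t) (δ t) / t) Filter.atTop (nhds Lαδ))
    (hβδ : Filter.Tendsto (fun t => dist (β t) (δ t) / t) Filter.atTop (nhds Lβδ)) :
    0 ≤ Lαβ ∧ Lαβ = Lβα ∧ (Lαβ = 0 ↔ ∀ t : ℝ, 0 ≤ t → α t = β t) ∧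
      Lαδ ≤ Lαβ + Lβδ := by
  have h0 : α 0 = β 0 := hpα.trans hpβ.symm
  refine ⟨?_, ?_, ⟨fun hL t ht => ?_, fun hαβeq => ?_⟩, ?_⟩
  · refine ge_of_tendsto hαβ ?_
    filter_upwards [eventually_ge_atTop 0] with t ht
    exact div_nonneg dist_nonneg ht
  · exact tendsto_nhds_unique hαβ (by simpa only [dist_comm] using hβα)
  · have hle := hα.dist_le_mul_of_tendsto huniq hconv hβ h0 hαβ ht
    rw [hL, mul_zero] at hle
    exact dist_le_zero.1 hle
  · refine tendsto_nhds_unique hαβ (tendsto_const_nhds.congr' ?_)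
    filter_upwards [eventually_ge_atTop 0] with t ht
    rw [hαβeq t ht, dist_self, zero_div]
  · refine le_of_tendsto_of_tendsto hαδ (hαβ.add hβδ) ?_
    filter_upwards [eventually_ge_atTop 0] with t ht
    rw [← add_div]
    exact div_le_div_of_nonneg_right (dist_triangle _ _ _) ht

/-- The Tits distance Td on the sphere at infinity, computed via
rays from a fixed base point p, is a metric: nonnegative, symmetric, vanishing
exactly for equal ideal points (equal rays from p), and satisfying the triangle
inequality. -/
theorem tits_distance_is_metric
    {X : Type*} [MetricSpace X] [CompleteSpace X] [SimplyConnectedSpace X]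
    (huniq : UniquelyGeodesic X) (hconv : BusemannConvex X)
    (p : X) (α β δ : ℝ → X)
    (hα : IsGeodesicRay α) (hβ : IsGeodesicRay β) (hδ : IsGeodesicRay δ)
    (hpα : α 0 = p) (hpβ : β 0 = p) (hpδ : δ 0 = p)
    (Lαβ Lβα Lαδ Lβδ : ℝ)
    (hαβ : Filter.Tendsto (fun t => dist (α t) (β t) / t) Filter.atTop (nhds Lαβ))
    (hβα : Filter.Tendsto (fun t => dist (β t) (α t) / t) Filter.atTop (nhds Lβα))
    (hαδ : Filter.Tendsto (fun t => dist (α t) (δ t) / t) Filter.atTop (nhds Lαδ))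
    (hβδ : Filter.Tendsto (fun t => dist (β t) (δ t) / t) Filter.atTop (nhds Lβδ)) :
    0 ≤ Lαβ ∧ Lαβ = Lβα ∧ (Lαβ = 0 ↔ ∀ t : ℝ, 0 ≤ t → α t = β t) ∧
      Lαδ ≤ Lαβ + Lβδ :=
  tits_distance_is_metric_general huniq hconv p α β δ hα hβ hpα hpβ Lαβ Lβα Lαδ Lβδ hαβ hβα hαδ hβδ
end

section
/- Let α, β : ℝ → X be parallel unit-speed geodesic lines in a Busemann nonpositively curved uniquely geodesic space X with d(α(t), β(t)) ≡ c. For t₁ < t₂ let Σ(t, s) be the point at parameter fraction (t − t₁)/(t₂ − t₁) along the geodesic from the point at arclength s on the geodesic [α(t₁), β(t₁)] to the point at arclength s on [α(t₂), β(t₂)]. Then for each t ∈ [t₁, t₂], the curve s ↦ Σ(t, s) is a geodesic of length exactly c joining α(t) to β(t). -/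
/-- Key step of the flat strip lemma. Let α, β be parallel
unit-speed geodesic lines at constant distance c, let γ (resp. δ) be the
unit-speed geodesic from α(t₁) to β(t₁) (resp. from α(t₂) to β(t₂)), and let
σ s be the constant-speed geodesic from γ(s) to δ(s) (parameterized on [0,1]).
Then for each t ∈ [t₁,t₂] the transversal s ↦ σ s ((t−t₁)/(t₂−t₁)) is a
unit-speed geodesic of length exactly c joining α(t) to β(t). -/
theorem flat_strip_transversals_are_geodesics
    {X : Type*} [MetricSpace X]
    (huniq : UniquelyGeodesic X) (hconv : BusemannConvex X)
    (α β : ℝ → X)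
    (hα : IsGeodesicLine 1 α) (hβ : IsGeodesicLine 1 β)
    (c : ℝ) (hc : 0 < c)
    (hpar : ∀ t : ℝ, dist (α t) (β t) = c)
    (t₁ t₂ : ℝ) (ht : t₁ < t₂)
    (γ δ : ℝ → X)
    (hγ : IsGeodesicLine 1 γ) (hδ : IsGeodesicLine 1 δ)
    (hγ0 : γ 0 = α t₁) (hγc : γ c = β t₁)
    (hδ0 : δ 0 = α t₂) (hδc : δ c = β t₂)
    (σ : ℝ → ℝ → X)
    (hσ0 : ∀ s : ℝ, σ s 0 = γ s)
    (hσ1 : ∀ s : ℝ, σ s 1 = δ s)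
    (hσgeo : ∀ s : ℝ, IsGeodesicLine (dist (γ s) (δ s)) (σ s)) :
    ∀ t : ℝ, t ∈ Set.Icc t₁ t₂ →
      (∀ s s' : ℝ, s ∈ Set.Icc 0 c → s' ∈ Set.Icc 0 c →
        dist (σ s ((t - t₁) / (t₂ - t₁))) (σ s' ((t - t₁) / (t₂ - t₁))) = |s - s'|) ∧
      σ 0 ((t - t₁) / (t₂ - t₁)) = α t ∧
      σ c ((t - t₁) / (t₂ - t₁)) = β t := by
  intro t htt
  have hd : (0:ℝ) < t₂ - t₁ := sub_pos.mpr ht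
  set l : ℝ := (t - t₁) / (t₂ - t₁) with hldef
  have hl0 : 0 ≤ l := div_nonneg (sub_nonneg.mpr htt.1) hd.le
  have hl1 : l ≤ 1 := (div_le_one hd).mpr (by linarith [htt.2])
  have hlt : t₁ + l * (t₂ - t₁) = t := by
    rw [hldef, div_mul_cancel₀ _ hd.ne']; ring
  -- σ 0 is the reparametrized α
  have hσα : ∀ u : ℝ, σ 0 u = α (t₁ + u * (t₂ - t₁)) := by
    have hdα : dist (α t₁) (α t₂) = t₂ - t₁ := by
      rw [hα, one_mul, abs_of_nonpos (by linarith)]; ring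
    obtain ⟨g, _, hgu⟩ := huniq (α t₁) (α t₂)
    have h1 : σ 0 = g := by
      refine hgu _ ⟨by rw [hσ0 0, hγ0], by rw [hσ1 0, hδ0], ?_⟩
      have := hσgeo 0
      rwa [hγ0, hδ0] at this
    have h2 : (fun u : ℝ => α (t₁ + u * (t₂ - t₁))) = g := by
      refine hgu _ ⟨by simp, by simp, ?_⟩
      intro u v
      rw [hα, hdα, one_mul]
      rw [show t₁ + u * (t₂ - t₁) - (t₁ + v * (t₂ - t₁)) = (t₂ - t₁) * (u - v) by ring,
        abs_mul, abs_of_pos hd]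
    intro u
    rw [h1, ← h2]
  -- σ c is the reparametrized β
  have hσβ : ∀ u : ℝ, σ c u = β (t₁ + u * (t₂ - t₁)) := by
    have hdβ : dist (β t₁) (β t₂) = t₂ - t₁ := by
      rw [hβ, one_mul, abs_of_nonpos (by linarith)]; ring
    obtain ⟨g, _, hgu⟩ := huniq (β t₁) (β t₂)
    have h1 : σ c = g := by
      refine hgu _ ⟨by rw [hσ0 c, hγc], by rw [hσ1 c, hδc], ?_⟩
      have := hσgeo c
      rwa [hγc, hδc] at this
    have h2 : (fun u : ℝ => β (t₁ + u * (t₂ - t₁))) = g := by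
      refine hgu _ ⟨by simp, by simp, ?_⟩
      intro u v
      rw [hβ, hdβ, one_mul]
      rw [show t₁ + u * (t₂ - t₁) - (t₁ + v * (t₂ - t₁)) = (t₂ - t₁) * (u - v) by ring,
        abs_mul, abs_of_pos hd]
    intro u
    rw [h1, ← h2]
  have hend0 : σ 0 l = α t := by rw [hσα, hlt]
  have hendc : σ c l = β t := by rw [hσβ, hlt]
  -- upper bound from convexity
  have hupper : ∀ s s' : ℝ, dist (σ s l) (σ s' l) ≤ |s - s'| := by
    intro s s'
    have hcv := hconv (σ s) (σ s') _ _ (hσgeo s) (hσgeo s')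
    have key := hcv.2 (Set.mem_univ (0:ℝ)) (Set.mem_univ (1:ℝ))
      (by linarith : (0:ℝ) ≤ 1 - l) hl0 (by ring)
    simp only [smul_eq_mul, mul_zero, mul_one, zero_add] at key
    rw [hσ0 s, hσ0 s', hσ1 s, hσ1 s', hγ s s', hδ s s', one_mul] at key
    calc dist (σ s l) (σ s' l) ≤ (1 - l) * |s - s'| + l * |s - s'| := key
      _ = |s - s'| := by ring
  -- lower bound
  have hlower : ∀ s s' : ℝ, s ∈ Set.Icc 0 c → s' ∈ Set.Icc 0 c → s ≤ s' →
      s' - s ≤ dist (σ s l) (σ s' l) := by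
    intro s s' hs hs' hss
    have h4 := dist_triangle4 (σ 0 l) (σ s l) (σ s' l) (σ c l)
    have h0c : dist (σ 0 l) (σ c l) = c := by rw [hend0, hendc, hpar t]
    have h1 : dist (σ 0 l) (σ s l) ≤ s := by
      have := hupper 0 s
      rwa [show |(0:ℝ) - s| = s by rw [abs_of_nonpos (by linarith [hs.1])]; ring] at this
    have h2 : dist (σ s' l) (σ c l) ≤ c - s' := by
      have := hupper s' c
      rw [abs_of_nonpos (by linarith [hs'.2])] at this
      linarith
    linarith
  refine ⟨?_, hend0, hendc⟩
  intro s s' hs hs'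
  rcases le_total s s' with h | h
  · refine le_antisymm (hupper s s') ?_
    rw [abs_of_nonpos (by linarith)]
    have := hlower s s' hs hs' h
    linarith
  · refine le_antisymm (hupper s s') ?_
    rw [abs_of_nonneg (by linarith)]
    have := hlower s' s hs' hs h
    rw [dist_comm] at this
    linarith
end
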